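/- arXiv:2203.17139 — 8 statements merged into one kernel-verified Lean document; each statement's English description precedes it below -/
import Mathlib

section
/- Let n, k be positive integers with 1 ≤ k < n and p = k/n, and let B be a binomial random variable with parameters n and p. Then E[max(B − k, 0)] = (1−p)·k·P(B = k), i.e. ∑_{j=k+1}^{n} (j−k)·C(n,j)·p^j·(1−p)^{n−j} = (1−p)·k·C(n,k)·p^k·(1−p)^{n−k}. -/
/-!
With `q = 1 - p`, consecutive binomial probabilities satisfy
`q (j + 1) P(j + 1) = p (n - j) P(j)`. Splitting `j - n p = q j - p (n - j)` then makes
`(j - n p) P(j)` telescope, with primitive `p (j - n) P(j)`, so that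
`∑_{j > k} (j - n p) P(j) = p (n - k) P(k)` for every `p`. At `p = k / n` the left side is
the expected overflow and `p (n - k) = (1 - p) k`.
-/

open Finset

/-- The probability that a binomial random variable with parameters `n`, `p`
takes the value `j`. -/
noncomputable def binomPMF (n : ℕ) (p : ℝ) (j : ℕ) : ℝ :=
  (n.choose j : ℝ) * p ^ j * (1 - p) ^ (n - j)

theorem one_sub_mul_succ_mul_binomPMF_succ (n j : ℕ) (p : ℝ) :
    (1 - p) * (j + 1) * binomPMF n p (j + 1) = p * (n - j) * binomPMF n p j := by
  rcases lt_or_ge j n with hjn | hnj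
  · have hchoose : (n.choose (j + 1) : ℝ) * (j + 1) = n.choose j * ((n : ℝ) - j) := by
      have := congrArg (Nat.cast : ℕ → ℝ) (Nat.choose_succ_right_eq n j)
      push_cast [Nat.cast_sub hjn.le] at this
      exact this
    have hexp : n - j = n - (j + 1) + 1 := by omega
    unfold binomPMF
    rw [hexp, pow_succ, pow_succ]
    linear_combination p ^ j * p * (1 - p) ^ (n - (j + 1)) * (1 - p) * hchoose
  · rcases hnj.eq_or_lt with rfl | hnj
    · simp [binomPMF]
    · simp [binomPMF, Nat.choose_eq_zero_of_lt hnj,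
        Nat.choose_eq_zero_of_lt (hnj.trans j.lt_succ_self)]

theorem sum_Icc_sub_mul_binomPMF (n k : ℕ) (p : ℝ) (hkn : k ≤ n) :
    ∑ j ∈ Icc (k + 1) n, ((j : ℝ) - n * p) * binomPMF n p j
      = p * (n - k) * binomPMF n p k := by
  set f : ℕ → ℝ := fun j ↦ p * (j - n) * binomPMF n p j
  have hstep : ∀ j, (((j + 1 : ℕ) : ℝ) - n * p) * binomPMF n p (j + 1) = f (j + 1) - f j := by
    intro j
    simp only [f]
    push_cast
    linear_combination one_sub_mul_succ_mul_binomPMF_succ n j p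
  rw [← Ico_add_one_right_eq_Icc, ← sum_Ico_add', sum_congr rfl fun j _ ↦ hstep j,
    sum_Ico_sub _ hkn]
  simp only [f, sub_self, mul_zero, zero_mul]
  ring

theorem expectation_overflow_formula_general (n k : ℕ) (hkn : k < n)
    (p : ℝ) (hp : p = (k : ℝ) / (n : ℝ)) :
    ∑ j ∈ Finset.Icc (k + 1) n, ((j : ℝ) - (k : ℝ)) * binomPMF n p j
      = (1 - p) * (k : ℝ) * binomPMF n p k := by
  have hmean : (n : ℝ) * p = k := by
    rw [hp, mul_div_cancel₀]
    exact Nat.cast_ne_zero.mpr (by omega)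
  have hsum := sum_Icc_sub_mul_binomPMF n k p hkn.le
  rw [hmean] at hsum
  rw [hsum]
  linear_combination binomPMF n p k * hmean

/-- For `p = k/n` with `1 ≤ k < n`, the expectation of
`max (B - k, 0)` for `B ~ Bin(n,p)` satisfies
`∑_{j=k+1}^{n} (j−k)·P(B = j) = (1−p)·k·P(B = k)`. -/
theorem expectation_overflow_formula (n k : ℕ) (hk : 1 ≤ k) (hkn : k < n)
    (p : ℝ) (hp : p = (k : ℝ) / (n : ℝ)) :
    ∑ j ∈ Finset.Icc (k + 1) n, ((j : ℝ) - (k : ℝ)) * binomPMF n p j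
      = (1 - p) * (k : ℝ) * binomPMF n p k :=
  expectation_overflow_formula_general n k hkn p hp
end

section
/- Let n, k be integers with 1 ≤ k < n and p = k/n. Define t₀ = 1/(12n + 1) − (1/(12k) + 1/(12(n−k))) and t₁ = 1/(12n) − (1/(12k + 1) + 1/(12(n−k) + 1)). Then exp(t₀)/√(2πk(1−p)) < P(Bin(n,p) = k) < exp(t₁)/√(2πk(1−p)), where P(Bin(n,p) = k) = C(n,k)·p^k·(1−p)^{n−k}. -/
open Real Filter Topology Stirling
open scoped Nat

theorem StrictAnti.lt_of_tendsto {α : Type*} [TopologicalSpace α] [Preorder α]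
    [OrderClosedTopology α] {a : ℕ → α} {L : α} (ha : StrictAnti a)
    (h : Tendsto a atTop (𝓝 L)) (n : ℕ) : L < a n :=
  (ha.antitone.le_of_tendsto h (n + 1)).trans_lt (ha n.lt_succ_self)

theorem StrictMono.lt_of_tendsto {α : Type*} [TopologicalSpace α] [Preorder α]
    [OrderClosedTopology α] {a : ℕ → α} {L : α} (ha : StrictMono a)
    (h : Tendsto a atTop (𝓝 L)) (n : ℕ) : a n < L :=
  (ha n.lt_succ_self).trans_le (ha.monotone.ge_of_tendsto h (n + 1))

namespace Stirling

theorem log_stirlingSeq_sdiff_lt (n : ℕ) :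
    log (stirlingSeq (n + 1)) - log (stirlingSeq (n + 2)) <
      1 / (12 * ((n : ℝ) + 1)) - 1 / (12 * ((n : ℝ) + 2)) := by
  set r := ((1 : ℝ) / (2 * (n + 1) + 1)) ^ 2 with hr
  have hr0 : 0 < r := by positivity
  have hr1 : r < 1 := by grw [hr, ← n.zero_le]; norm_num
  have hgeom : HasSum (fun j ↦ r ^ (j + 1) / 3)
      (1 / (12 * ((n : ℝ) + 1)) - 1 / (12 * ((n : ℝ) + 2))) := by
    grind [((hasSum_geometric_of_lt_one hr0.le hr1).mul_right r).div_const 3]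
  refine hasSum_lt (i := 1) (fun j ↦ ?_) ?_ (log_stirlingSeq_sdiff_hasSum n) hgeom
  · simpa [hr, field] using show (3 : ℝ) ≤ 2 * (j + 1) + 1 by norm_cast; grind
  · have : 0 < r ^ 2 := by positivity
    push_cast
    linarith

theorem lt_log_stirlingSeq_sdiff (n : ℕ) :
    1 / (12 * ((n : ℝ) + 1) + 1) - 1 / (12 * ((n : ℝ) + 2) + 1) <
      log (stirlingSeq (n + 1)) - log (stirlingSeq (n + 2)) := by
  refine lt_of_lt_of_le ?_ (sum_le_hasSum (Finset.range 2) (fun j _ ↦ by positivity)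
    (log_stirlingSeq_sdiff_hasSum n))
  simp only [Finset.sum_range_succ, Finset.sum_range_zero]
  push_cast
  rw [← sub_pos]
  field_simp
  ring_nf
  positivity

noncomputable def stirlingRemainder (n : ℕ) : ℝ :=
  log (stirlingSeq n) - log √π

theorem tendsto_stirlingRemainder : Tendsto stirlingRemainder atTop (𝓝 0) := by
  have h := ((continuousAt_log (sqrt_pos.2 pi_pos).ne').tendsto.comp
    tendsto_stirlingSeq_sqrt_pi).sub_const (log √π)
  rwa [sub_self] at h

theorem tendsto_stirlingRemainder_succ_sub (c : ℝ) :
    Tendsto (fun n : ℕ ↦ stirlingRemainder (n + 1) - 1 / (12 * ((n : ℝ) + 1) + c)) atTop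
      (𝓝 0) := by
  have h : Tendsto (fun n : ℕ ↦ 12 * ((n : ℝ) + 1) + c) atTop atTop :=
    tendsto_atTop_add_const_right _ c <| (tendsto_atTop_add_const_right _ 1
      tendsto_natCast_atTop_atTop).const_mul_atTop (by norm_num)
  simpa using (tendsto_stirlingRemainder.comp (tendsto_add_atTop_nat 1)).sub
    ((tendsto_const_nhds (x := (1 : ℝ))).div_atTop h)

theorem strictAnti_stirlingRemainder_sub :
    StrictAnti fun n : ℕ ↦ stirlingRemainder (n + 1) - 1 / (12 * ((n : ℝ) + 1) + 1) := by
  refine strictAnti_nat_of_succ_lt fun n ↦ ?_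
  have := lt_log_stirlingSeq_sdiff n
  simp only [stirlingRemainder]
  push_cast
  ring_nf at this ⊢
  linarith

theorem strictMono_stirlingRemainder_sub :
    StrictMono fun n : ℕ ↦ stirlingRemainder (n + 1) - 1 / (12 * ((n : ℝ) + 1)) := by
  refine strictMono_nat_of_lt_succ fun n ↦ ?_
  have := log_stirlingSeq_sdiff_lt n
  simp only [stirlingRemainder]
  push_cast
  ring_nf at this ⊢
  linarith

theorem lt_stirlingRemainder {n : ℕ} (hn : n ≠ 0) :
    1 / (12 * (n : ℝ) + 1) < stirlingRemainder n := by
  obtain ⟨n, rfl⟩ := Nat.exists_eq_add_one_of_ne_zero hn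
  have := strictAnti_stirlingRemainder_sub.lt_of_tendsto
    (tendsto_stirlingRemainder_succ_sub 1) n
  push_cast
  linarith

theorem stirlingRemainder_lt {n : ℕ} (hn : n ≠ 0) :
    stirlingRemainder n < 1 / (12 * (n : ℝ)) := by
  obtain ⟨n, rfl⟩ := Nat.exists_eq_add_one_of_ne_zero hn
  have := strictMono_stirlingRemainder_sub.lt_of_tendsto
    (by simpa using tendsto_stirlingRemainder_succ_sub 0) n
  push_cast
  linarith

theorem factorial_eq_mul_exp_stirlingRemainder {n : ℕ} (hn : n ≠ 0) :
    (n ! : ℝ) = √(2 * π * n) * (n / exp 1) ^ n * exp (stirlingRemainder n) := by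
  have hs : 0 < stirlingSeq n := by
    obtain ⟨n, rfl⟩ := Nat.exists_eq_add_one_of_ne_zero hn
    exact stirlingSeq'_pos n
  rw [stirlingRemainder, exp_sub, exp_log hs, exp_log (sqrt_pos.2 pi_pos), stirlingSeq,
    show (2 * π * n : ℝ) = π * (2 * n) by ring, sqrt_mul pi_pos.le]
  field_simp

end Stirling

theorem div_pow_add_mul_div_pow_mul_div_pow {x y : ℝ} (c : ℝ) (k m : ℕ) (hxy : x + y ≠ 0) :
    ((x + y) / c) ^ (k + m) * (x / (x + y)) ^ k * (y / (x + y)) ^ m =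
      (x / c) ^ k * (y / c) ^ m := by
  have hx : (x + y) / c * (x / (x + y)) = x / c := by field_simp
  have hy : (x + y) / c * (y / (x + y)) = y / c := by field_simp
  rw [← hx, ← hy, mul_pow, mul_pow, pow_add]
  ring

theorem binomPMF_div_eq_exp_stirlingRemainder {n k : ℕ} (hk : k ≠ 0) (hkn : k < n) :
    binomPMF n (k / n) k = exp (stirlingRemainder n - stirlingRemainder k -
      stirlingRemainder (n - k)) / √(2 * π * k * (1 - k / n)) := by
  obtain ⟨m, rfl⟩ := Nat.exists_eq_add_of_le hkn.le
  have hm : m ≠ 0 := by omega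
  have hq : 1 - (k : ℝ) / (k + m) = m / (k + m) := by field_simp; ring
  have hsqrt : √(2 * π * k * (m / (k + m))) =
      √(2 * π * k) * √(2 * π * m) / √(2 * π * (k + m)) := by
    rw [eq_div_iff (by positivity), ← sqrt_mul (by positivity), ← sqrt_mul (by positivity)]
    congr 1
    field_simp
  rw [binomPMF, Nat.add_sub_cancel_left, Nat.cast_choose ℝ hkn.le, Nat.add_sub_cancel_left,
    factorial_eq_mul_exp_stirlingRemainder (by omega), factorial_eq_mul_exp_stirlingRemainder hk,
    factorial_eq_mul_exp_stirlingRemainder hm, exp_sub, exp_sub]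
  push_cast
  rw [hq, hsqrt]
  field_simp
  exact div_pow_add_mul_div_pow_mul_div_pow _ k m (by positivity)

/-- Tight (Robbins–Stirling) bounds on `P(Bin(n, k/n) = k)`:
`exp(t₀)/√(2πk(1−p)) < P(Bin(n,p) = k) < exp(t₁)/√(2πk(1−p))`, where
`t₀ = 1/(12n+1) − (1/(12k) + 1/(12(n−k)))` and
`t₁ = 1/(12n) − (1/(12k+1) + 1/(12(n−k)+1))`. -/
theorem binom_mode_robbins_bounds (n k : ℕ) (hk : 1 ≤ k) (hkn : k < n)
    (p t₀ t₁ : ℝ) (hp : p = (k : ℝ) / (n : ℝ))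
    (ht₀ : t₀ = 1 / (12 * (n : ℝ) + 1)
      - (1 / (12 * (k : ℝ)) + 1 / (12 * ((n : ℝ) - (k : ℝ)))))
    (ht₁ : t₁ = 1 / (12 * (n : ℝ))
      - (1 / (12 * (k : ℝ) + 1) + 1 / (12 * ((n : ℝ) - (k : ℝ)) + 1))) :
    Real.exp t₀ / Real.sqrt (2 * Real.pi * (k : ℝ) * (1 - p)) < binomPMF n p k ∧
    binomPMF n p k < Real.exp t₁ / Real.sqrt (2 * Real.pi * (k : ℝ) * (1 - p)) := by
  subst hp ht₀ ht₁
  have hk0 : k ≠ 0 := by omega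
  have hn0 : n ≠ 0 := by omega
  have hnk0 : n - k ≠ 0 := by omega
  have hcast : ((n - k : ℕ) : ℝ) = n - k := Nat.cast_sub hkn.le
  have hq : 0 < 1 - (k : ℝ) / n := by
    rw [sub_pos, div_lt_one (by positivity)]
    exact_mod_cast hkn
  have hsqrt : 0 < √(2 * π * k * (1 - k / n)) := sqrt_pos.2 (by positivity)
  rw [binomPMF_div_eq_exp_stirlingRemainder hk0 hkn]
  have hn_lo := lt_stirlingRemainder hn0
  have hn_hi := stirlingRemainder_lt hn0
  have hk_lo := lt_stirlingRemainder hk0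
  have hk_hi := stirlingRemainder_lt hk0
  have hnk_lo := lt_stirlingRemainder hnk0
  have hnk_hi := stirlingRemainder_lt hnk0
  rw [hcast] at hnk_lo hnk_hi
  constructor <;> refine div_lt_div_of_pos_right (exp_lt_exp.2 ?_) hsqrt <;> linarith
end

section
/- Consider n balls thrown independently and uniformly at random into m bins of capacity k, where n = k·m, k ≥ 1, m ≥ 2, and p = 1/m. Let B_i be the number of balls in bin i and X = ∑_{i=1}^{m} max(B_i − k, 0) be the number of balls overflowing their bins. Then E[X] = n·(1−p)·P(Bin(n,p) = k); moreover, if k ≥ 20 and n ≥ 5k, then E[X] ≤ n/√(2πk). -/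
open Finset

/-- Number of balls landing in bin `i` when the throw outcome is `ω`
(ball `j` lands in bin `ω j`). -/
def binCount (n m : ℕ) (i : Fin m) (ω : Fin n → Fin m) : ℕ :=
  (Finset.univ.filter fun j => ω j = i).card

/-- The total overflow: number of balls exceeding the capacity `k` of their bin. -/
noncomputable def overflowX (n m k : ℕ) (ω : Fin n → Fin m) : ℝ :=
  ∑ i : Fin m, max ((binCount n m i ω : ℝ) - (k : ℝ)) 0

/-- Expectation of a real-valued random variable on the uniform space of
functions `Fin n → Fin m` (balls-into-bins model). -/
noncomputable def expec (n m : ℕ) (f : (Fin n → Fin m) → ℝ) : ℝ :=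
  (∑ ω : Fin n → Fin m, f ω) / (Fintype.card (Fin n → Fin m) : ℝ)

/-!
Each bin count `B_i` is `Bin(n, p)`-distributed, so by linearity `E[X] = m · E[(B - k)⁺]`.
Writing `b j = P(B = j)`, De Moivre's identity `(j - n p) b j = f j - f (j + 1)` with
`f j = j (1 - p) b j` telescopes to `E[(B - k)⁺] = k (1 - p) b k` when `n p = k`.
For the bound, the Stirling sequence `j! / (√(2j) (j/e)^j)` decreases to `√π`; bounding `n! / k!`
through its monotonicity and `(n - k)!` through its limit gives `b k ≤ √(n / (2π k (n - k)))`,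
and the factor `1 - p = (n - k) / n` absorbs the `n - k`.
-/

open Real
open scoped Nat

section FunctionFibers

variable {α β : Type*} [Fintype α] [DecidableEq α] [Fintype β] [DecidableEq β]

theorem card_filter_fiber_eq (b : β) (s : Finset α) :
    #{ω : α → β | ({a | ω a = b} : Finset α) = s}
      = (Fintype.card β - 1) ^ (Fintype.card α - #s) := by
  have hpi : ({ω : α → β | ({a | ω a = b} : Finset α) = s} : Finset (α → β))
      = Fintype.piFinset fun a => if a ∈ s then {b} else {b}ᶜ := by
    ext ω
    simp only [mem_filter, mem_univ, true_and, Fintype.mem_piFinset, Finset.ext_iff]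
    refine forall_congr' fun a => ?_
    split_ifs with ha <;> simp [ha]
  rw [hpi, Fintype.card_piFinset]
  simp only [apply_ite card, card_singleton, card_compl]
  rw [prod_ite, prod_const_one, one_mul, prod_const, filter_not, filter_mem_eq_inter, univ_inter,
    card_sdiff_of_subset (subset_univ s), card_univ]

theorem sum_comp_card_fiber {M : Type*} [AddCommMonoid M] (b : β) (g : ℕ → M) :
    ∑ ω : α → β, g #{a | ω a = b}
      = ∑ j ∈ range (Fintype.card α + 1),
          ((Fintype.card α).choose j * (Fintype.card β - 1) ^ (Fintype.card α - j)) • g j := by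
  calc ∑ ω : α → β, g #{a | ω a = b}
      = ∑ s : Finset α, ∑ ω : α → β with ({a | ω a = b} : Finset α) = s, g #s :=
        (sum_fiberwise' univ (fun ω : α → β => ({a | ω a = b} : Finset α)) (fun s => g #s)).symm
    _ = ∑ s : Finset α, (Fintype.card β - 1) ^ (Fintype.card α - #s) • g #s :=
        sum_congr rfl fun s _ => by rw [sum_const, card_filter_fiber_eq]
    _ = _ := by
        rw [← powerset_univ,
          sum_powerset_apply_card (fun j => (Fintype.card β - 1) ^ (Fintype.card α - j) • g j),
          card_univ]
        simp only [mul_smul]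

end FunctionFibers

noncomputable def binomialProb (n : ℕ) (p : ℝ) (j : ℕ) : ℝ :=
  n.choose j * p ^ j * (1 - p) ^ (n - j)

section BinomialIdentities

variable {n : ℕ} {p : ℝ}

theorem binomialProb_eq_zero_of_lt {j : ℕ} (h : n < j) : binomialProb n p j = 0 := by
  simp [binomialProb, Nat.choose_eq_zero_of_lt h]

theorem succ_mul_one_sub_mul_binomialProb_succ (j : ℕ) :
    (j + 1) * (1 - p) * binomialProb n p (j + 1) = ((n - j : ℕ) : ℝ) * p * binomialProb n p j := by
  rcases lt_or_ge j n with hj | hj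
  · have hchoose : ((n.choose (j + 1) : ℕ) : ℝ) * (j + 1) = n.choose j * ((n - j : ℕ) : ℝ) := by
      exact_mod_cast Nat.choose_succ_right_eq n j
    have hpow : (1 - p) ^ (n - j) = (1 - p) ^ (n - (j + 1)) * (1 - p) := by
      rw [← pow_succ]; congr 1; omega
    simp only [binomialProb, hpow, pow_succ]
    linear_combination p ^ j * (1 - p) ^ (n - (j + 1)) * (1 - p) * p * hchoose
  · simp [binomialProb_eq_zero_of_lt (Nat.lt_succ_of_le hj), Nat.sub_eq_zero_of_le hj]

theorem sum_Ico_sub_mul_binomialProb {k : ℕ} (hk : k ≤ n) :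
    ∑ j ∈ Ico k (n + 1), (j - n * p) * binomialProb n p j
      = k * (1 - p) * binomialProb n p k := by
  set f : ℕ → ℝ := fun j => j * (1 - p) * binomialProb n p j
  have hstep : ∀ j ∈ Ico k (n + 1), (j - n * p) * binomialProb n p j = -(f (j + 1) - f j) := by
    intro j hj
    have hsucc := succ_mul_one_sub_mul_binomialProb_succ (n := n) (p := p) j
    rw [Nat.cast_sub (Nat.lt_succ_iff.1 (mem_Ico.1 hj).2)] at hsucc
    simp only [f]
    push_cast
    linear_combination hsucc
  rw [sum_congr rfl hstep, sum_neg_distrib, sum_Ico_sub f (by omega)]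
  simp [f, binomialProb_eq_zero_of_lt n.lt_succ_self]

theorem sum_binomialProb_mul_max_sub {k : ℕ} (hk : k ≤ n) (hp : n * p = k) :
    ∑ j ∈ range (n + 1), binomialProb n p j * max ((j : ℝ) - k) 0
      = k * (1 - p) * binomialProb n p k := by
  rw [range_eq_Ico, ← sum_Ico_consecutive _ k.zero_le (by omega : k ≤ n + 1),
    sum_eq_zero fun j hj => ?_, zero_add, ← sum_Ico_sub_mul_binomialProb hk, hp]
  · refine sum_congr rfl fun j hj => ?_
    rw [max_eq_left (sub_nonneg.2 (by exact_mod_cast (mem_Ico.1 hj).1)), mul_comm]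
  · rw [max_eq_right (sub_nonpos.2 (by exact_mod_cast (mem_Ico.1 hj).2.le)), mul_zero]

end BinomialIdentities

theorem factorial_mul_stirling_le {k n : ℕ} (hk : k ≠ 0) (hkn : k ≤ n) :
    (n ! : ℝ) * (√(2 * k) * (k / exp 1) ^ k) ≤ k ! * (√(2 * n) * (n / exp 1) ^ n) := by
  have hn : n ≠ 0 := by omega
  have hseq := Stirling.stirlingSeq'_antitone (Nat.pred_le_pred hkn)
  simp only [Function.comp, Nat.succ_pred hk, Nat.succ_pred hn, Stirling.stirlingSeq] at hseq
  rwa [div_le_div_iff₀ (by positivity) (by positivity)] at hseq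

theorem binomialProb_mean_le {k n : ℕ} (hk : k ≠ 0) (hkn : k < n) :
    binomialProb n (k / n) k ≤ √(n / (2 * π * k * (n - k))) := by
  set d := n - k with hd
  have hnr : (n : ℝ) ≠ 0 := by exact_mod_cast (by omega : n ≠ 0)
  have hdr : (n : ℝ) - k = d := by rw [hd, Nat.cast_sub hkn.le]
  have hd0 : (0 : ℝ) < d := by rw [← hdr]; exact sub_pos.2 (by exact_mod_cast hkn)
  set b := binomialProb n (k / n) k
  set P := (k / n : ℝ) ^ k * (d / n) ^ d
  have hb : b = n.choose k * P := by
    simp only [b, P, binomialProb, one_sub_div hnr, hdr, mul_assoc, ← hd]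
  have hsplit : (n / exp 1 : ℝ) ^ n * P = (k / exp 1) ^ k * (d / exp 1) ^ d := by
    have hcancel : ∀ j : ℝ, (n / exp 1) * (j / n) = j / exp 1 := fun j => by field_simp
    rw [← hcancel k, ← hcancel d, mul_pow, mul_pow, ← mul_mul_mul_comm, ← pow_add,
      Nat.add_sub_cancel' hkn.le]
  have hfact : (n.choose k : ℝ) * k ! * d ! = n ! := by
    exact_mod_cast Nat.choose_mul_factorial_mul_factorial hkn.le
  have hupper : b * √(2 * k) * d ! ≤ √(2 * n) * (d / exp 1) ^ d := by
    refine le_of_mul_le_mul_right (a := k ! * (k / exp 1) ^ k) ?_ (by positivity)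
    calc b * √(2 * k) * d ! * (k ! * (k / exp 1) ^ k)
        = n ! * (√(2 * k) * (k / exp 1) ^ k) * P := by rw [hb, ← hfact]; ring
      _ ≤ k ! * (√(2 * n) * (n / exp 1) ^ n) * P := by
          gcongr ?_ * _
          exact factorial_mul_stirling_le hk hkn.le
      _ = √(2 * n) * (d / exp 1) ^ d * (k ! * (k / exp 1) ^ k) := by
          rw [mul_assoc, mul_assoc, hsplit]; ring
  have hkey : b * (√(2 * k) * √(2 * π * d)) ≤ √(2 * n) := by
    refine le_of_mul_le_mul_right (a := (d / exp 1) ^ d) ?_ (by positivity)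
    calc b * (√(2 * k) * √(2 * π * d)) * (d / exp 1) ^ d
        = b * √(2 * k) * (√(2 * π * d) * (d / exp 1) ^ d) := by ring
      _ ≤ b * √(2 * k) * d ! := by
          have hb0 : 0 ≤ b := by rw [hb]; positivity
          gcongr
          exact Stirling.le_factorial_stirling d
      _ ≤ √(2 * n) * (d / exp 1) ^ d := hupper
  rw [hdr]
  calc b ≤ √(2 * n) / (√(2 * k) * √(2 * π * d)) := (le_div_iff₀ (by positivity)).2 hkey
    _ = √(n / (2 * π * k * d)) := by
        rw [← sqrt_mul (by positivity), ← sqrt_div' _ (by positivity)]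
        congr 1
        field_simp

theorem one_sub_mul_binomialProb_mean_le {k n : ℕ} (hk : k ≠ 0) (hkn : k < n) :
    (1 - k / n) * binomialProb n (k / n) k ≤ 1 / √(2 * π * k) := by
  have hn : (0 : ℝ) < n := by exact_mod_cast (by omega : 0 < n)
  have hk0 : (0 : ℝ) < k := by exact_mod_cast Nat.pos_of_ne_zero hk
  set q : ℝ := 1 - k / n with hq
  have hq0 : 0 < q := by rw [hq, sub_pos, div_lt_one hn]; exact_mod_cast hkn
  have hq1 : q ≤ 1 := by rw [hq]; linarith [div_nonneg hk0.le hn.le]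
  have hnk : (n : ℝ) - k = n * q := by rw [hq]; field_simp
  calc q * binomialProb n (k / n) k ≤ q * √(n / (2 * π * k * (n - k))) :=
        mul_le_mul_of_nonneg_left (binomialProb_mean_le hk hkn) hq0.le
    _ = √(q ^ 2 * (n / (2 * π * k * (n * q)))) := by
        rw [hnk, sqrt_mul (sq_nonneg q), sqrt_sq hq0.le]
    _ = √(q / (2 * π * k)) := by
        congr 1
        field_simp
    _ ≤ √(1 / (2 * π * k)) := by gcongr
    _ = 1 / √(2 * π * k) := by rw [one_div, sqrt_inv, one_div]

section BallsIntoBins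

variable {n m : ℕ}

theorem expec_sum {ι : Type*} (s : Finset ι) (f : ι → (Fin n → Fin m) → ℝ) :
    expec n m (fun ω => ∑ i ∈ s, f i ω) = ∑ i ∈ s, expec n m (f i) := by
  rw [expec, sum_comm, sum_div]
  rfl

theorem binomialProb_one_div {j : ℕ} (hm : m ≠ 0) (hj : j ≤ n) :
    binomialProb n (1 / m) j = n.choose j * (m - 1 : ℕ) ^ (n - j) / m ^ n := by
  have hm' : (m : ℝ) ≠ 0 := by exact_mod_cast hm
  rw [binomialProb, one_sub_div hm', Nat.cast_sub (by omega), Nat.cast_one, div_pow, div_pow,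
    one_pow, ← Nat.add_sub_cancel' hj, pow_add, Nat.add_sub_cancel_left]
  field_simp

theorem expec_comp_binCount (hm : m ≠ 0) (i : Fin m) (g : ℕ → ℝ) :
    expec n m (fun ω => g (binCount n m i ω))
      = ∑ j ∈ range (n + 1), binomialProb n (1 / m) j * g j := by
  simp only [expec, binCount]
  rw [sum_comp_card_fiber, Fintype.card_fun, Fintype.card_fin, Fintype.card_fin, sum_div]
  refine sum_congr rfl fun j hj => ?_
  rw [binomialProb_one_div hm (Nat.lt_succ_iff.1 (mem_range.1 hj))]
  push_cast
  ring

end BallsIntoBins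

/-- Throwing `n = k·m` balls uniformly into `m` bins of
capacity `k`, the expected overflow satisfies
`E[X] = n·(1−p)·P(Bin(n,p) = k)` where `p = 1/m`; moreover if `k ≥ 20` and
`n ≥ 5k`, then `E[X] ≤ n/√(2πk)`. -/
theorem expected_spare_size (n m k : ℕ) (hk : 1 ≤ k) (hm : 2 ≤ m)
    (hn : n = k * m) (p : ℝ) (hp : p = 1 / (m : ℝ)) :
    expec n m (overflowX n m k)
      = (n : ℝ) * (1 - p) * ((n.choose k : ℝ) * p ^ k * (1 - p) ^ (n - k)) ∧
    (20 ≤ k → 5 * k ≤ n →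
      expec n m (overflowX n m k) ≤ (n : ℝ) / Real.sqrt (2 * Real.pi * (k : ℝ))) := by
  have hkn : k < n := by nlinarith
  have hn0 : (n : ℝ) ≠ 0 := by exact_mod_cast (by omega : n ≠ 0)
  have hpk : p = k / n := by
    rw [hp, hn, Nat.cast_mul, ← div_div, div_self (by positivity)]
  have hE : expec n m (overflowX n m k) = n * (1 - p) * binomialProb n p k := by
    calc expec n m (overflowX n m k)
        = ∑ i : Fin m, expec n m (fun ω => max ((binCount n m i ω : ℝ) - k) 0) :=
          expec_sum _ _
      _ = ∑ _i : Fin m, k * (1 - p) * binomialProb n p k := by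
          refine sum_congr rfl fun i _ => ?_
          rw [expec_comp_binCount (by omega) i (fun j => max ((j : ℝ) - k) 0), ← hp,
            sum_binomialProb_mul_max_sub hkn.le (by rw [hpk, mul_div_cancel₀ _ hn0])]
      _ = n * (1 - p) * binomialProb n p k := by
          rw [sum_const, card_univ, Fintype.card_fin, nsmul_eq_mul, hn]
          push_cast
          ring
  refine ⟨hE, fun _ _ => ?_⟩
  rw [hE, mul_assoc, hpk]
  calc (n : ℝ) * ((1 - k / n) * binomialProb n (k / n) k) ≤ n * (1 / √(2 * π * k)) :=
        mul_le_mul_of_nonneg_left (one_sub_mul_binomialProb_mean_le (by omega) hkn) n.cast_nonneg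
    _ = n / √(2 * π * k) := mul_one_div _ _
end

section
/- Consider n balls thrown independently and uniformly at random into m bins, where n = k·m with k ≥ 1 and m ≥ 2, and let p = 1/m. Let B_i be the number of balls in bin i and X = ∑_{i=1}^{m} max(B_i − k, 0). Then Var(X) ≤ m·Var(B_1) = n(1−p). -/
open Finset

/-- Variance of a real-valued random variable on the uniform space of
functions `Fin n → Fin m`. -/
noncomputable def variance' (n m : ℕ) (f : (Fin n → Fin m) → ℝ) : ℝ :=
  expec n m (fun ω => (f ω - expec n m f) ^ 2)

/-!
Bounded differences bound the variance (Efron–Stein): if changing one coordinate of a uniformly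
random `σ : Fin n → α` moves `f σ` by at most `c`, then `Var f ≤ n c² / 2`. This follows by
induction on `n` from the law of total variance, splitting off the first coordinate, and from
`Var g = 𝔼 (g a - g b)² / 2` for independent copies `a, b`. Moving one ball changes the overflow
by at most one, since the bin it leaves loses at most one unit of overflow and the bin it enters
gains at most one, so `Var X ≤ n / 2 ≤ n (1 - 1/m)`. The same induction computes the variance of
a sum of i.i.d. indicators, `m Var B₁ = m · n (1/m)(1 - 1/m) = n (1 - p)`.
-/

open scoped BigOperators
open Function

section UniformVariance

variable {Ω α β : Type*} [Fintype Ω] [Fintype α] [Fintype β]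

noncomputable def uniformVariance (f : Ω → ℝ) : ℝ :=
  𝔼 ω, (f ω - 𝔼 ω', f ω') ^ 2

lemma variance'_eq_uniformVariance {n m : ℕ} (f : (Fin n → Fin m) → ℝ) :
    variance' n m f = uniformVariance f := by
  simp only [variance', expec, uniformVariance, Fintype.expect_eq_sum_div_card]

lemma uniformVariance_comp_equiv (e : α ≃ β) (f : β → ℝ) :
    uniformVariance (f ∘ e) = uniformVariance f := by
  unfold uniformVariance
  rw [Fintype.expect_equiv e (f ∘ e) f fun _ => rfl]
  exact Fintype.expect_equiv e _ _ fun _ => rfl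

lemma uniformVariance_add_const [Nonempty Ω] (f : Ω → ℝ) (c : ℝ) :
    uniformVariance (fun ω => f ω + c) = uniformVariance f := by
  simp only [uniformVariance, expect_add_distrib, Fintype.expect_const, add_sub_add_right_eq_sub]

lemma uniformVariance_eq_expect_sq_sub_sq [Nonempty Ω] (f : Ω → ℝ) :
    uniformVariance f = 𝔼 ω, f ω ^ 2 - (𝔼 ω, f ω) ^ 2 := by
  simp only [uniformVariance, sub_sq, expect_add_distrib, expect_sub_distrib, ← expect_mul,
    ← mul_expect, Fintype.expect_const]
  ring

lemma uniformVariance_eq_half_expect_sq_sub [Nonempty Ω] (f : Ω → ℝ) :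
    uniformVariance f = (𝔼 a, 𝔼 b, (f a - f b) ^ 2) / 2 := by
  simp only [uniformVariance_eq_expect_sq_sub_sq, sub_sq, expect_add_distrib, expect_sub_distrib,
    ← expect_mul, ← mul_expect, Fintype.expect_const]
  ring

lemma uniformVariance_le_of_abs_sub_le [Nonempty Ω] {f : Ω → ℝ} {c : ℝ}
    (hf : ∀ a b, |f a - f b| ≤ c) : uniformVariance f ≤ c ^ 2 / 2 := by
  have hsq : ∀ a b, (f a - f b) ^ 2 ≤ c ^ 2 := fun a b =>
    sq_abs (f a - f b) ▸ pow_le_pow_left₀ (abs_nonneg _) (hf a b) 2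
  rw [uniformVariance_eq_half_expect_sq_sub]
  gcongr
  exact expect_le univ_nonempty fun a _ => expect_le univ_nonempty fun b _ => hsq a b

lemma uniformVariance_prod [Nonempty α] [Nonempty β] (f : α × β → ℝ) :
    uniformVariance f =
      𝔼 a, uniformVariance (fun b => f (a, b)) + uniformVariance (fun a => 𝔼 b, f (a, b)) := by
  simp only [uniformVariance_eq_expect_sq_sub_sq, ← univ_product_univ, expect_product,
    expect_sub_distrib]
  ring

lemma uniformVariance_add_prod [Nonempty α] [Nonempty β] (g : α → ℝ) (h : β → ℝ) :
    uniformVariance (fun p : α × β => g p.1 + h p.2) = uniformVariance g + uniformVariance h := by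
  have hfiber : ∀ a, uniformVariance (fun b => g a + h b) = uniformVariance h := fun a => by
    simpa only [add_comm] using uniformVariance_add_const h (g a)
  simp only [uniformVariance_prod, hfiber, Fintype.expect_const, expect_add_distrib,
    uniformVariance_add_const]
  ring

end UniformVariance

section Tuples

variable {α : Type*} [Fintype α]

lemma uniformVariance_cons {n : ℕ} (f : (Fin (n + 1) → α) → ℝ) :
    uniformVariance f = uniformVariance (fun p : α × (Fin n → α) => f (Fin.cons p.1 p.2)) :=
  (uniformVariance_comp_equiv (Fin.consEquiv fun _ => α) f).symm

theorem uniformVariance_le_of_abs_update_sub_le [Nonempty α] {c : ℝ} :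
    ∀ {n : ℕ} (f : (Fin n → α) → ℝ), (∀ σ i b, |f (update σ i b) - f σ| ≤ c) →
      uniformVariance f ≤ n * c ^ 2 / 2
  | 0, f, _ => by
    simpa using uniformVariance_le_of_abs_sub_le (c := 0) fun a b => by
      rw [Subsingleton.elim a b, sub_self, abs_zero]
  | n + 1, f, hf => by
    have hfiber : ∀ a, uniformVariance (fun τ => f (Fin.cons a τ)) ≤ n * c ^ 2 / 2 :=
      fun a => uniformVariance_le_of_abs_update_sub_le _ fun τ i b => by
        simpa only [Fin.cons_update] using hf (Fin.cons a τ) i.succ b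
    have hmean : uniformVariance (fun a => 𝔼 τ, f (Fin.cons a τ)) ≤ c ^ 2 / 2 := by
      refine uniformVariance_le_of_abs_sub_le fun a b => ?_
      rw [← expect_sub_distrib]
      refine (abs_expect_le _ _).trans (expect_le univ_nonempty fun τ _ => ?_)
      simpa only [Fin.update_cons_zero] using hf (Fin.cons b τ) 0 a
    rw [uniformVariance_cons, uniformVariance_prod]
    have hfiber_mean := expect_le univ_nonempty fun a _ => hfiber a
    push_cast
    linarith

lemma uniformVariance_sum_comp_apply [Nonempty α] (g : α → ℝ) :
    ∀ n : ℕ, uniformVariance (fun σ : Fin n → α => ∑ j, g (σ j)) = n * uniformVariance g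
  | 0 => by simp [uniformVariance]
  | n + 1 => by
    rw [uniformVariance_cons]
    simp only [Fin.sum_univ_succ, Fin.cons_zero, Fin.cons_succ]
    rw [uniformVariance_add_prod g fun τ : Fin n → α => ∑ j, g (τ j),
      uniformVariance_sum_comp_apply g n]
    push_cast
    ring

lemma uniformVariance_indicator [DecidableEq α] (q : α) :
    uniformVariance (fun a => if a = q then (1 : ℝ) else 0)
      = 1 / Fintype.card α * (1 - 1 / Fintype.card α) := by
  have : Nonempty α := ⟨q⟩
  simp only [uniformVariance_eq_expect_sq_sub_sq, ite_pow, one_pow, zero_pow two_ne_zero,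
    Fintype.expect_eq_sum_div_card, sum_ite_eq', mem_univ, if_true]
  ring

end Tuples

section BallsIntoBins

variable {n m : ℕ}

lemma binCount_eq_sum_indicator (q : Fin m) (σ : Fin n → Fin m) :
    (binCount n m q σ : ℝ) = ∑ j, if σ j = q then 1 else 0 :=
  natCast_card_filter _ _

lemma uniformVariance_binCount (q : Fin m) :
    uniformVariance (fun σ : Fin n → Fin m => (binCount n m q σ : ℝ))
      = n * (1 / m * (1 - 1 / m)) := by
  have : Nonempty (Fin m) := ⟨q⟩
  simp only [binCount_eq_sum_indicator]
  rw [uniformVariance_sum_comp_apply (fun a => if a = q then (1 : ℝ) else 0),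
    uniformVariance_indicator, Fintype.card_fin]

lemma sum_comp_add_indicator {ι : Type*} [Fintype ι] [DecidableEq ι] (φ : ℝ → ℝ) (c : ι → ℝ)
    (a : ι) : ∑ q, φ (c q + if a = q then 1 else 0) = ∑ q, φ (c q) + (φ (c a + 1) - φ (c a)) := by
  rw [← sub_eq_iff_eq_add', ← sum_sub_distrib, Fintype.sum_eq_single a fun q hq => by
    simp [Ne.symm hq]]
  simp

lemma abs_sum_comp_binCount_update_sub_le (φ : ℝ → ℝ)
    (hφ : ∀ x, φ x ≤ φ (x + 1) ∧ φ (x + 1) ≤ φ x + 1) (σ : Fin n → Fin m) (i : Fin n) (b : Fin m) :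
    |∑ q, φ (binCount n m q (update σ i b)) - ∑ q, φ (binCount n m q σ)| ≤ 1 := by
  set c : Fin m → ℝ := fun q => ∑ j ∈ univ.erase i, if σ j = q then 1 else 0
  have hsplit : ∀ τ : Fin n → Fin m, (∀ j ≠ i, τ j = σ j) →
      ∑ q, φ (binCount n m q τ) = ∑ q, φ (c q) + (φ (c (τ i) + 1) - φ (c (τ i))) := by
    intro τ hτ
    rw [← sum_comp_add_indicator]
    refine sum_congr rfl fun q _ => congrArg φ ?_
    rw [binCount_eq_sum_indicator, ← add_sum_erase _ _ (mem_univ i), add_comm]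
    exact congrArg₂ _ (sum_congr rfl fun j hj => by rw [hτ j (ne_of_mem_erase hj)]) rfl
  rw [hsplit _ fun j hj => update_of_ne hj _ _, hsplit σ fun _ _ => rfl, update_self, abs_le]
  constructor <;> linarith [hφ (c b), hφ (c (σ i))]

lemma abs_overflowX_update_sub_le (k : ℕ) (σ : Fin n → Fin m) (i : Fin n) (b : Fin m) :
    |overflowX n m k (update σ i b) - overflowX n m k σ| ≤ 1 :=
  abs_sum_comp_binCount_update_sub_le (fun x => max (x - k) 0) (fun x => by
    constructor <;> (rw [max_def, max_def]; split_ifs <;> linarith)) σ i b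

end BallsIntoBins

/-- Throwing `n = k·m` balls uniformly into `m` bins,
with `p = 1/m`, the overflow `X = ∑ᵢ max(Bᵢ − k, 0)` satisfies
`Var(X) ≤ m·Var(B₁) = n(1−p)`. -/
theorem variance_spare_size (n m k : ℕ) (hm : 2 ≤ m)
    (p : ℝ) (hp : p = 1 / (m : ℝ)) :
    variance' n m (overflowX n m k)
      ≤ (m : ℝ) * variance' n m (fun ω => (binCount n m (⟨0, by omega⟩ : Fin m) ω : ℝ)) ∧
    (m : ℝ) * variance' n m (fun ω => (binCount n m (⟨0, by omega⟩ : Fin m) ω : ℝ))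
      = (n : ℝ) * (1 - p) := by
  have : Nonempty (Fin m) := ⟨⟨0, by omega⟩⟩
  have hm' : (2 : ℝ) ≤ m := by exact_mod_cast hm
  have hvarB : (m : ℝ) * variance' n m (fun ω => (binCount n m (⟨0, by omega⟩ : Fin m) ω : ℝ))
      = n * (1 - p) := by
    rw [variance'_eq_uniformVariance, uniformVariance_binCount, hp]
    field_simp
  refine ⟨?_, hvarB⟩
  have hp_le : p ≤ 1 / 2 := by rw [hp]; gcongr
  calc variance' n m (overflowX n m k) ≤ n * 1 ^ 2 / 2 := by
        rw [variance'_eq_uniformVariance]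
        exact uniformVariance_le_of_abs_update_sub_le _ (abs_overflowX_update_sub_le k)
    _ ≤ n * (1 - p) := by nlinarith [(n.cast_nonneg : (0 : ℝ) ≤ n)]
    _ = _ := hvarB.symm
end

section
/- Consider n balls thrown independently and uniformly at random into m bins, where n = k·m, k ≥ 20, n ≥ 5k, and p = 1/m. Let B_i be the number of balls in bin i and X = ∑_{i=1}^{m} max(B_i − k, 0). Then for every δ ≥ 0, P(X ≥ (1+δ)·E[X]) ≤ exp(−δ²·m·0.99·(1−p)/(πk)). -/
open Finset

open scoped Classical in
/-- Probability of an event on the uniform space of functions `Fin n → Fin m`. -/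
noncomputable def prob (n m : ℕ) (P : (Fin n → Fin m) → Prop) : ℝ :=
  ((Finset.univ.filter P).card : ℝ) / (Fintype.card (Fin n → Fin m) : ℝ)

/-!
Moving a single ball changes the overflow `X` by at most one, so McDiarmid's bounded-differences
inequality, proved by exposing the balls one at a time and applying Hoeffding's lemma to each
step, gives `P(X ≥ E X + ε) ≤ exp (-ε² / (2n))`. Since `∑ᵢ Bᵢ = n = k m`, we have
`X = ½ ∑ᵢ |Bᵢ - k|`, and the interpolation inequality `(E D²)³ ≤ (E |D|)² E D⁴` applied
to `D = Bᵢ - k`, whose second moment is `s = k (1 - p)` and whose fourth moment is at most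
`s (3s + 1)`, gives `E X ≥ m s / (2 √(3s + 1))`. For `k ≥ 20` and `m ≥ 5` this is at least
`m √(1.98 (1 - p) / π)`, and `ε = δ E X` yields the claimed exponent.
-/

open scoped BigOperators

section ProductExpectation

variable {α : Type*} [Fintype α] {N : ℕ}

lemma expect_fin_succ_pi (F : (Fin (N + 1) → α) → ℝ) :
    𝔼 ω, F ω = 𝔼 a, 𝔼 ω : Fin N → α, F (Fin.cons a ω) := by
  rw [Fintype.expect_equiv (Fin.consEquiv fun _ => α).symm F (fun x => F (Fin.consEquiv _ x))
    (fun ω => by simp [Fin.consEquiv]), ← Finset.expect_product']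
  rfl

lemma expect_comp_sum_fin_succ (c : α → ℝ) (g : ℝ → ℝ) :
    𝔼 ω : Fin (N + 1) → α, g (∑ j, c (ω j))
      = 𝔼 a, 𝔼 ω : Fin N → α, g (c a + ∑ j, c (ω j)) := by
  simp [expect_fin_succ_pi, Fin.sum_univ_succ]

variable [Nonempty α] (c : α → ℝ)

lemma expect_sum_comp (h0 : 𝔼 a, c a = 0) :
    ∀ N : ℕ, 𝔼 ω : Fin N → α, ∑ j, c (ω j) = 0
  | 0 => by simp
  | N + 1 => by
    rw [expect_comp_sum_fin_succ c fun x => x]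
    simp only [Finset.expect_add_distrib, Fintype.expect_const, expect_sum_comp h0 N, add_zero, h0]

lemma expect_sq_sum_comp (h0 : 𝔼 a, c a = 0) :
    ∀ N : ℕ, 𝔼 ω : Fin N → α, (∑ j, c (ω j)) ^ 2 = N * 𝔼 a, c a ^ 2
  | 0 => by simp
  | N + 1 => by
    rw [expect_comp_sum_fin_succ c (· ^ 2)]
    simp only [add_sq, Finset.expect_add_distrib, ← Finset.mul_expect, Fintype.expect_const,
      expect_sum_comp c h0 N, expect_sq_sum_comp h0 N, mul_zero, Finset.expect_const_zero]
    push_cast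
    ring

lemma expect_pow_four_sum_comp (h0 : 𝔼 a, c a = 0) :
    ∀ N : ℕ, 𝔼 ω : Fin N → α, (∑ j, c (ω j)) ^ 4
      = 3 * N * (N - 1) * (𝔼 a, c a ^ 2) ^ 2 + N * 𝔼 a, c a ^ 4
  | 0 => by simp
  | N + 1 => by
    have expand : ∀ x y : ℝ, (x + y) ^ 4 = x ^ 4 + 4 * x ^ 3 * y + 6 * x ^ 2 * y ^ 2
        + 4 * x * y ^ 3 + y ^ 4 := fun x y => by ring
    rw [expect_comp_sum_fin_succ c (· ^ 4)]
    simp only [expand, Finset.expect_add_distrib, ← Finset.mul_expect, ← Finset.expect_mul,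
      Fintype.expect_const, expect_sum_comp c h0 N, expect_sq_sum_comp c h0 N,
      expect_pow_four_sum_comp h0 N, h0, mul_zero, zero_mul, Finset.expect_const_zero]
    push_cast
    ring

end ProductExpectation

lemma sum_sq_pow_three_le_sq_sum_abs_mul {ι : Type*} (s : Finset ι) (D : ι → ℝ) :
    (∑ i ∈ s, D i ^ 2) ^ 3 ≤ (∑ i ∈ s, |D i|) ^ 2 * ∑ i ∈ s, D i ^ 4 := by
  set Q := ∑ i ∈ s, D i ^ 2
  have hQ : 0 ≤ Q := Finset.sum_nonneg fun i _ => sq_nonneg _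
  have hAC : Q ^ 2 ≤ (∑ i ∈ s, |D i|) * ∑ i ∈ s, |D i| ^ 3 :=
    Finset.sum_sq_le_sum_mul_sum_of_sq_le_mul s (fun i _ => abs_nonneg _)
      (fun i _ => by positivity) fun i _ => le_of_eq (by rw [← sq_abs (D i)]; ring)
  have hCF : (∑ i ∈ s, |D i| ^ 3) ^ 2 ≤ Q * ∑ i ∈ s, D i ^ 4 :=
    Finset.sum_sq_le_sum_mul_sum_of_sq_le_mul s (fun i _ => sq_nonneg _)
      (fun i _ => by positivity) fun i _ =>
      le_of_eq (by rw [show D i ^ 4 = (D i ^ 2) ^ 2 by ring, ← sq_abs (D i)]; ring)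
  rcases hQ.eq_or_lt with hQ0 | hQpos
  · rw [← hQ0, zero_pow three_ne_zero]; positivity
  · refine le_of_mul_le_mul_left ?_ hQpos
    calc Q * Q ^ 3 = (Q ^ 2) ^ 2 := by ring
      _ ≤ ((∑ i ∈ s, |D i|) * ∑ i ∈ s, |D i| ^ 3) ^ 2 := by gcongr
      _ ≤ (∑ i ∈ s, |D i|) ^ 2 * (Q * ∑ i ∈ s, D i ^ 4) := by rw [mul_pow]; gcongr
      _ = Q * ((∑ i ∈ s, |D i|) ^ 2 * ∑ i ∈ s, D i ^ 4) := by ring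

lemma expect_sq_pow_three_le_sq_expect_abs_mul {ι : Type*} [Fintype ι] (D : ι → ℝ) :
    (𝔼 i, D i ^ 2) ^ 3 ≤ (𝔼 i, |D i|) ^ 2 * 𝔼 i, D i ^ 4 := by
  simp only [Fintype.expect_eq_sum_div_card, div_pow]
  rw [div_mul_div_comm, ← pow_succ]
  gcongr
  exact sum_sq_pow_three_le_sq_sum_abs_mul _ D

lemma exp_mul_le_cosh_add_mul_sinh (t : ℝ) {w : ℝ} (hw : |w| ≤ 1) :
    Real.exp (t * w) ≤ Real.cosh t + w * Real.sinh t := by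
  obtain ⟨hw₁, hw₂⟩ := abs_le.1 hw
  have hconv := convexOn_exp.2 (Set.mem_univ (-t)) (Set.mem_univ t)
    (by linarith : (0 : ℝ) ≤ (1 - w) / 2) (by linarith : (0 : ℝ) ≤ (1 + w) / 2) (by ring)
  simp only [smul_eq_mul] at hconv
  calc Real.exp (t * w) = Real.exp ((1 - w) / 2 * -t + (1 + w) / 2 * t) := by ring_nf
    _ ≤ (1 - w) / 2 * Real.exp (-t) + (1 + w) / 2 * Real.exp t := hconv
    _ = Real.cosh t + w * Real.sinh t := by rw [Real.cosh_eq, Real.sinh_eq]; ring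

lemma expect_exp_mul_le {ι : Type*} [Fintype ι] [Nonempty ι] (t : ℝ) {W : ι → ℝ}
    (h0 : 𝔼 i, W i = 0) (h1 : ∀ i, |W i| ≤ 1) :
    𝔼 i, Real.exp (t * W i) ≤ Real.exp (t ^ 2 / 2) :=
  calc 𝔼 i, Real.exp (t * W i) ≤ 𝔼 i, (Real.cosh t + W i * Real.sinh t) :=
        Finset.expect_le_expect fun i _ => exp_mul_le_cosh_add_mul_sinh t (h1 i)
    _ = Real.cosh t := by
        rw [Finset.expect_add_distrib, ← Finset.expect_mul, h0, Fintype.expect_const]; ring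
    _ ≤ Real.exp (t ^ 2 / 2) := Real.cosh_le_exp_half_sq t

def BoundedDifferences {ι α : Type*} [DecidableEq ι] (f : (ι → α) → ℝ) : Prop :=
  ∀ ω i a, f (Function.update ω i a) ≤ f ω + 1

namespace BoundedDifferences

variable {α : Type*} [Fintype α] [Nonempty α] {N : ℕ}

lemma expect_cons {f : (Fin (N + 1) → α) → ℝ} (hf : BoundedDifferences f) :
    BoundedDifferences fun ω : Fin N → α => 𝔼 a, f (Fin.cons a ω) := fun ω j a =>
  calc 𝔼 b, f (Fin.cons b (Function.update ω j a)) ≤ 𝔼 b, (f (Fin.cons b ω) + 1) :=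
        Finset.expect_le_expect fun b _ => by rw [Fin.cons_update]; exact hf _ _ _
    _ = 𝔼 b, f (Fin.cons b ω) + 1 := by rw [Finset.expect_add_distrib, Fintype.expect_const]

lemma abs_sub_expect_cons_le {f : (Fin (N + 1) → α) → ℝ} (hf : BoundedDifferences f)
    (a : α) (ω : Fin N → α) : |f (Fin.cons a ω) - 𝔼 b, f (Fin.cons b ω)| ≤ 1 := by
  have hcons : ∀ b c : α, f (Fin.cons b ω) ≤ f (Fin.cons c ω) + 1 := fun b c => by
    simpa [Fin.update_cons_zero] using hf (Fin.cons c ω) 0 b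
  have hle : f (Fin.cons a ω) ≤ 𝔼 b, f (Fin.cons b ω) + 1 := by
    have := Finset.le_expect (s := Finset.univ) Finset.univ_nonempty fun b _ => hcons a b
    rwa [Finset.expect_add_distrib, Fintype.expect_const] at this
  have hge : 𝔼 b, f (Fin.cons b ω) ≤ f (Fin.cons a ω) + 1 :=
    Finset.expect_le Finset.univ_nonempty fun b _ => hcons b a
  exact abs_sub_le_iff.2 ⟨by linarith, by linarith⟩

theorem expect_exp_mul_sub_le (t : ℝ) :
    ∀ {N : ℕ} (f : (Fin N → α) → ℝ), BoundedDifferences f →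
      𝔼 ω, Real.exp (t * (f ω - 𝔼 ω', f ω')) ≤ Real.exp (N * (t ^ 2 / 2))
  | 0, f, _ => by simp [Subsingleton.elim _ (Fin.elim0 : Fin 0 → α)]
  | N + 1, f, hf => by
    -- `g` averages out the first ball; given the others, `f - g` is centred and bounded by `1`.
    set g : (Fin N → α) → ℝ := fun ω => 𝔼 a, f (Fin.cons a ω)
    have hmean : 𝔼 ω, f ω = 𝔼 ω, g ω := by rw [expect_fin_succ_pi, Finset.expect_comm]
    have hsplit : ∀ ω a, Real.exp (t * (f (Fin.cons a ω) - 𝔼 ω', g ω'))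
        = Real.exp (t * (g ω - 𝔼 ω', g ω')) * Real.exp (t * (f (Fin.cons a ω) - g ω)) :=
      fun ω a => by rw [← Real.exp_add]; ring_nf
    calc 𝔼 ω, Real.exp (t * (f ω - 𝔼 ω', f ω'))
        = 𝔼 ω, Real.exp (t * (g ω - 𝔼 ω', g ω'))
            * 𝔼 a, Real.exp (t * (f (Fin.cons a ω) - g ω)) := by
          rw [hmean, expect_fin_succ_pi, Finset.expect_comm]
          simp only [hsplit, Finset.mul_expect]
      _ ≤ 𝔼 ω, Real.exp (t * (g ω - 𝔼 ω', g ω')) * Real.exp (t ^ 2 / 2) := by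
          refine Finset.expect_le_expect fun ω _ => ?_
          gcongr
          refine expect_exp_mul_le t ?_ fun a => hf.abs_sub_expect_cons_le a ω
          rw [Finset.expect_sub_distrib, Fintype.expect_const, sub_self]
      _ ≤ Real.exp (N * (t ^ 2 / 2)) * Real.exp (t ^ 2 / 2) := by
          rw [← Finset.expect_mul]
          gcongr
          exact expect_exp_mul_sub_le t g hf.expect_cons
      _ = Real.exp ((N + 1 : ℕ) * (t ^ 2 / 2)) := by rw [← Real.exp_add]; push_cast; ring_nf

end BoundedDifferences

lemma expec_eq_expect {n m : ℕ} (f : (Fin n → Fin m) → ℝ) : expec n m f = 𝔼 ω, f ω :=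
  (Fintype.expect_eq_sum_div_card f).symm

lemma prob_le_expect_exp {n m : ℕ} (f : (Fin n → Fin m) → ℝ) {t : ℝ} (ht : 0 ≤ t) (a : ℝ) :
    prob n m (fun ω => a ≤ f ω) ≤ 𝔼 ω, Real.exp (t * (f ω - a)) := by
  rw [prob, Fintype.expect_eq_sum_div_card]
  gcongr
  calc ((Finset.univ.filter fun ω => a ≤ f ω).card : ℝ)
      = ∑ ω ∈ Finset.univ.filter fun ω => a ≤ f ω, 1 := by simp
    _ ≤ ∑ ω ∈ Finset.univ.filter fun ω => a ≤ f ω, Real.exp (t * (f ω - a)) :=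
        Finset.sum_le_sum fun ω hω =>
          Real.one_le_exp (mul_nonneg ht (sub_nonneg.2 (Finset.mem_filter.1 hω).2))
    _ ≤ ∑ ω, Real.exp (t * (f ω - a)) :=
        Finset.sum_le_sum_of_subset_of_nonneg (Finset.filter_subset _ _)
          fun _ _ _ => (Real.exp_pos _).le

theorem BoundedDifferences.prob_add_le {N m : ℕ} [NeZero m] {f : (Fin N → Fin m) → ℝ}
    (hf : BoundedDifferences f) (hN : 0 < N) {ε : ℝ} (hε : 0 ≤ ε) :
    prob N m (fun ω => expec N m f + ε ≤ f ω) ≤ Real.exp (-ε ^ 2 / (2 * N)) := by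
  have hN' : (0 : ℝ) < N := Nat.cast_pos.2 hN
  -- the minimiser of the Chernoff exponent `N t² / 2 - t ε`
  set t := ε / N
  calc prob N m (fun ω => expec N m f + ε ≤ f ω)
      ≤ 𝔼 ω, Real.exp (t * (f ω - (expec N m f + ε))) := prob_le_expect_exp f (by positivity) _
    _ = Real.exp (-(t * ε)) * 𝔼 ω, Real.exp (t * (f ω - 𝔼 ω', f ω')) := by
        rw [Finset.mul_expect, expec_eq_expect]
        refine Finset.expect_congr rfl fun ω _ => ?_
        rw [← Real.exp_add]
        ring_nf
    _ ≤ Real.exp (-(t * ε)) * Real.exp (N * (t ^ 2 / 2)) := by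
        gcongr
        exact hf.expect_exp_mul_sub_le t f
    _ = Real.exp (-ε ^ 2 / (2 * N)) := by
        rw [← Real.exp_add]
        congr 1
        simp only [t]
        field_simp
        ring

section BallsIntoBins

variable {n m k : ℕ}

lemma binCount_update_le (i : Fin m) (ω : Fin n → Fin m) (j : Fin n) (a : Fin m) :
    binCount n m i (Function.update ω j a) ≤ binCount n m i ω + if a = i then 1 else 0 := by
  unfold binCount
  split_ifs with ha
  · refine (Finset.card_le_card fun l hl => ?_).trans (Finset.card_insert_le j _)
    rcases eq_or_ne l j with rfl | hlj
    · exact Finset.mem_insert_self _ _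
    · simp_all
  · rw [add_zero]
    refine Finset.card_le_card fun l hl => ?_
    rcases eq_or_ne l j with rfl | hlj <;> simp_all

lemma boundedDifferences_overflowX : BoundedDifferences (overflowX n m k) := by
  intro ω j a
  calc overflowX n m k (Function.update ω j a)
      ≤ ∑ i, (max ((binCount n m i ω : ℝ) - k) 0 + if a = i then 1 else 0) := by
        refine Finset.sum_le_sum fun i _ => max_le ?_ (by positivity)
        have := binCount_update_le i ω j a
        have : (binCount n m i (Function.update ω j a) : ℝ)
            ≤ binCount n m i ω + if a = i then 1 else 0 := by exact_mod_cast this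
        linarith [le_max_left ((binCount n m i ω : ℝ) - k) 0]
    _ = overflowX n m k ω + 1 := by simp [Finset.sum_add_distrib, overflowX]

lemma sum_binCount (ω : Fin n → Fin m) : ∑ i, binCount n m i ω = n := by
  simpa [binCount] using (Finset.card_eq_sum_card_fiberwise (s := Finset.univ) (t := Finset.univ)
    (f := ω) fun _ _ => Finset.mem_univ _).symm

lemma overflowX_eq_half_sum_abs (hn : n = k * m) (ω : Fin n → Fin m) :
    overflowX n m k ω = (∑ i, |(binCount n m i ω : ℝ) - k|) / 2 := by
  have hsum : ∑ i, ((binCount n m i ω : ℝ) - k) = 0 := by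
    rw [Finset.sum_sub_distrib, ← Nat.cast_sum, sum_binCount, hn]
    simp [mul_comm]
  have hmax : ∀ x : ℝ, max x 0 = (x + |x|) / 2 := fun x => by
    rcases le_total 0 x with h | h
    · rw [max_eq_left h, abs_of_nonneg h]; ring
    · rw [max_eq_right h, abs_of_nonpos h]; ring
  simp only [overflowX, hmax, ← Finset.sum_div, Finset.sum_add_distrib, hsum, zero_add]

noncomputable def binVar (n m : ℕ) : ℝ := n * (1 / m) * (1 - 1 / m)

noncomputable def binIncrement (i a : Fin m) : ℝ := (if a = i then 1 else 0) - 1 / m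

lemma binCount_sub_eq_sum (i : Fin m) (ω : Fin n → Fin m) :
    (binCount n m i ω : ℝ) - n / m = ∑ j, binIncrement i (ω j) := by
  simp [binCount, binIncrement, Finset.sum_sub_distrib, Finset.sum_boole, div_eq_mul_inv]

lemma expect_comp_binIncrement [NeZero m] (i : Fin m) (g : ℝ → ℝ) :
    𝔼 a, g (binIncrement i a) = 1 / m * g (1 - 1 / m) + (1 - 1 / m) * g (-(1 / m)) := by
  have hm : (m : ℝ) ≠ 0 := Nat.cast_ne_zero.2 (NeZero.ne m)
  have hsplit : ∀ a, g (binIncrement i a)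
      = (if a = i then g (1 - 1 / m) - g (-(1 / m)) else 0) + g (-(1 / m)) := fun a => by
    unfold binIncrement
    split_ifs <;> simp
  simp only [Fintype.expect_eq_sum_div_card, hsplit, Finset.sum_add_distrib, Finset.sum_ite_eq',
    Finset.mem_univ, if_true, Finset.sum_const, Finset.card_univ, Fintype.card_fin, nsmul_eq_mul]
  field_simp
  ring

lemma expect_binIncrement [NeZero m] (i : Fin m) : 𝔼 a, binIncrement i a = 0 :=
  (expect_comp_binIncrement i id).trans (by simp only [id]; ring)

lemma expect_sq_binCount_sub [NeZero m] (i : Fin m) :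
    𝔼 ω : Fin n → Fin m, ((binCount n m i ω : ℝ) - n / m) ^ 2 = binVar n m := by
  simp only [binCount_sub_eq_sum, expect_sq_sum_comp _ (expect_binIncrement i),
    expect_comp_binIncrement i (· ^ 2), binVar]
  ring

lemma expect_pow_four_binCount_sub_le [NeZero m] (i : Fin m) :
    𝔼 ω : Fin n → Fin m, ((binCount n m i ω : ℝ) - n / m) ^ 4
      ≤ binVar n m * (3 * binVar n m + 1) := by
  simp only [binCount_sub_eq_sum, expect_pow_four_sum_comp _ (expect_binIncrement i),
    expect_comp_binIncrement i (· ^ 2), expect_comp_binIncrement i (· ^ 4), binVar]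
  generalize 1 / (m : ℝ) = p
  -- the gap between the two sides is `6 n p² (1 - p)²`
  nlinarith [mul_nonneg (Nat.cast_nonneg n : (0 : ℝ) ≤ n) (sq_nonneg (p * (1 - p)))]

lemma binVar_nonneg [NeZero m] : 0 ≤ binVar n m := by
  have hm : (1 : ℝ) ≤ m := Nat.one_le_cast.2 NeZero.one_le
  have : 1 / (m : ℝ) ≤ 1 := (div_le_one (by linarith)).2 hm
  unfold binVar
  have : 0 ≤ 1 - 1 / (m : ℝ) := by linarith
  positivity

lemma binVar_div_sqrt_le_expect_abs [NeZero m] (i : Fin m) :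
    binVar n m / √(3 * binVar n m + 1)
      ≤ 𝔼 ω : Fin n → Fin m, |(binCount n m i ω : ℝ) - n / m| := by
  set s := binVar n m
  set L := 𝔼 ω : Fin n → Fin m, |(binCount n m i ω : ℝ) - n / m|
  have hs : 0 ≤ s := binVar_nonneg
  have hL : 0 ≤ L := Finset.expect_nonneg fun _ _ => abs_nonneg _
  have hholder : s ^ 3 ≤ L ^ 2 * (s * (3 * s + 1)) := by
    have := expect_sq_pow_three_le_sq_expect_abs_mul
      fun ω : Fin n → Fin m => (binCount n m i ω : ℝ) - n / m
    rw [expect_sq_binCount_sub] at this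
    exact this.trans (by gcongr; exact expect_pow_four_binCount_sub_le i)
  rw [div_le_iff₀ (by positivity), ← pow_le_pow_iff_left₀ hs (by positivity) two_ne_zero,
    mul_pow, Real.sq_sqrt (by positivity)]
  rcases hs.eq_or_lt with hs0 | hspos
  · rw [← hs0, zero_pow two_ne_zero]; positivity
  · nlinarith

lemma expec_overflowX_nonneg : 0 ≤ expec n m (overflowX n m k) := by
  rw [expec_eq_expect]
  exact Finset.expect_nonneg fun ω _ => Finset.sum_nonneg fun i _ => le_max_right _ _

lemma le_expec_overflowX [NeZero m] (hn : n = k * m) :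
    m * binVar n m / (2 * √(3 * binVar n m + 1)) ≤ expec n m (overflowX n m k) := by
  have hk : (k : ℝ) = n / m := by
    rw [hn, Nat.cast_mul, mul_div_cancel_right₀ _ (Nat.cast_ne_zero.2 (NeZero.ne m))]
  rw [expec_eq_expect]
  simp only [overflowX_eq_half_sum_abs hn, ← Finset.expect_div, Finset.expect_sum_comm, hk]
  calc m * binVar n m / (2 * √(3 * binVar n m + 1))
      = (∑ _i : Fin m, binVar n m / √(3 * binVar n m + 1)) / 2 := by
        simp only [Finset.sum_const, Finset.card_univ, Fintype.card_fin, nsmul_eq_mul]; ring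
    _ ≤ _ := by gcongr with i; exact binVar_div_sqrt_le_expect_abs i

lemma le_pi_mul_sq_expec_overflowX (hn : n = k * m) (hk : 20 ≤ k) (hm : 5 ≤ m) :
    1.98 * (1 - 1 / m) * m ^ 2 ≤ Real.pi * expec n m (overflowX n m k) ^ 2 := by
  have : NeZero m := ⟨by omega⟩
  set μ := expec n m (overflowX n m k)
  set q : ℝ := 1 - 1 / m
  have hmR : (5 : ℝ) ≤ m := by exact_mod_cast hm
  have hkR : (20 : ℝ) ≤ k := by exact_mod_cast hk
  have hq : 4 / 5 ≤ q := by
    have : 1 / (m : ℝ) ≤ 1 / 5 := by gcongr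
    linarith
  have hq1 : q ≤ 1 := by
    have : 0 ≤ 1 / (m : ℝ) := by positivity
    linarith
  have hs : binVar n m = k * q := by
    rw [binVar, hn]; push_cast; simp only [q]; field_simp
  set s := binVar n m
  have hs16 : 16 ≤ s := by rw [hs]; nlinarith
  have hμ : m * s / (2 * √(3 * s + 1)) ≤ μ := le_expec_overflowX hn
  have hμsq : m ^ 2 * s ^ 2 / (4 * (3 * s + 1)) ≤ μ ^ 2 := by
    calc m ^ 2 * s ^ 2 / (4 * (3 * s + 1)) = (m * s / (2 * √(3 * s + 1))) ^ 2 := by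
          rw [div_pow, mul_pow, mul_pow, Real.sq_sqrt (by positivity)]; ring
      _ ≤ μ ^ 2 := by gcongr
  have hpi : 3.14 < Real.pi := Real.pi_gt_d2
  have hnum : 7.92 * q * (3 * s + 1) ≤ Real.pi * s ^ 2 := by nlinarith
  calc 1.98 * q * m ^ 2 = 7.92 * q * (3 * s + 1) * (m ^ 2 / (4 * (3 * s + 1))) := by
        field_simp; ring
    _ ≤ Real.pi * s ^ 2 * (m ^ 2 / (4 * (3 * s + 1))) := by gcongr
    _ = Real.pi * (m ^ 2 * s ^ 2 / (4 * (3 * s + 1))) := by ring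
    _ ≤ Real.pi * μ ^ 2 := by gcongr

end BallsIntoBins

/-- **Hoeffding bound.** Throwing `n = k·m` balls uniformly into
`m` bins (`k ≥ 20`, `n ≥ 5k`, `p = 1/m`), for every `δ ≥ 0`,
`P(X ≥ (1+δ)·E[X]) ≤ exp(−δ²·m·0.99·(1−p)/(πk))`. -/
theorem spare_deviation_hoeffding (n m k : ℕ) (hn : n = k * m)
    (hk : 20 ≤ k) (hn5 : 5 * k ≤ n) (p : ℝ) (hp : p = 1 / (m : ℝ))
    (δ : ℝ) (hδ : 0 ≤ δ) :
    prob n m (fun ω => (1 + δ) * expec n m (overflowX n m k) ≤ overflowX n m k ω)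
      ≤ Real.exp (-δ ^ 2 * (m : ℝ) * 0.99 * (1 - p) / (Real.pi * (k : ℝ))) := by
  have hm : 5 ≤ m := by nlinarith
  have : NeZero m := ⟨by omega⟩
  set μ := expec n m (overflowX n m k)
  have hμ := le_pi_mul_sq_expec_overflowX hn hk hm
  have hμ0 : 0 ≤ μ := expec_overflowX_nonneg
  have hevent : (fun ω => (1 + δ) * μ ≤ overflowX n m k ω)
      = fun ω => μ + δ * μ ≤ overflowX n m k ω := by simp only [add_mul, one_mul]
  rw [hevent]
  refine (boundedDifferences_overflowX.prob_add_le (by nlinarith) (by positivity)).trans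
    (Real.exp_le_exp.2 ?_)
  have hk0 : (0 : ℝ) < k := by exact_mod_cast (by omega : 0 < k)
  have hm0 : (0 : ℝ) < m := by exact_mod_cast (by omega : 0 < m)
  rw [hp, hn, neg_mul, neg_mul, neg_mul, neg_div, neg_div, neg_le_neg_iff, Nat.cast_mul,
    div_le_div_iff₀ (mul_pos Real.pi_pos hk0) (by positivity)]
  nlinarith [mul_le_mul_of_nonneg_left hμ (by positivity : (0 : ℝ) ≤ δ ^ 2 * k)]
end

section
/- Let n, k be positive integers with k + 1 < n and p = k/n. Then (n/(n+1))·P(Bin(n+1,p) > k+1) ≥ P(Bin(n,p) > k+1). -/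
open Finset

/-!
Pascal's rule splits `P(Bin(n+1,p) ≥ k+2)` as `p·(b + T) + (1-p)·T`, where `b = P(Bin(n,p) = k+1)`
and `T = P(Bin(n,p) ≥ k+2)`; since `np = k` the claim becomes `T ≤ k·b`. Beyond the mode `k+1`
consecutive probabilities shrink by a factor at most `k/(k+2)`, so `(k+2)·T ≤ k·(b + T)`,
that is `2T ≤ k·b`.
-/

theorem Finset.sum_Icc_eq_add_sum_Icc_succ {M : Type*} [AddCommMonoid M] (f : ℕ → M) {a b : ℕ}
    (h : a ≤ b) : ∑ j ∈ Icc a b, f j = f a + ∑ j ∈ Icc (a + 1) b, f j := by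
  rw [Icc_eq_cons_Ioc h, sum_cons, Icc_add_one_left_eq_Ioc]

theorem Finset.mul_sum_Icc_succ_le {R : Type*} [Semiring R] [PartialOrder R] [IsOrderedRing R]
    {f : ℕ → R} {a N : ℕ} {c d : R} (hd : 0 ≤ d) (hf : ∀ j ∈ Icc a N, 0 ≤ f j)
    (hstep : ∀ j ∈ Ico a N, c * f (j + 1) ≤ d * f j) :
    c * ∑ j ∈ Icc (a + 1) N, f j ≤ d * ∑ j ∈ Icc a N, f j := by
  calc c * ∑ j ∈ Icc (a + 1) N, f j
      = ∑ j ∈ Ico a N, c * f (j + 1) := by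
        rw [← mul_sum, sum_Ico_add', Ico_add_one_right_eq_Icc]
    _ ≤ ∑ j ∈ Ico a N, d * f j := sum_le_sum hstep
    _ ≤ ∑ j ∈ Icc a N, d * f j :=
        sum_le_sum_of_subset_of_nonneg Ico_subset_Icc_self
          fun j hj _ ↦ mul_nonneg hd (hf j hj)
    _ = d * ∑ j ∈ Icc a N, f j := (mul_sum _ _ _).symm

namespace binomPMF

theorem nonneg {n : ℕ} {p : ℝ} (hp₀ : 0 ≤ p) (hp₁ : p ≤ 1) (j : ℕ) : 0 ≤ binomPMF n p j := by
  have : 0 ≤ 1 - p := by linarith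
  unfold binomPMF; positivity

theorem nonneg_of_eq_div {n k : ℕ} {p : ℝ} (hp : p = k / n) (hkn : k ≤ n) (j : ℕ) :
    0 ≤ binomPMF n p j :=
  nonneg (by rw [hp]; positivity) (hp ▸ div_le_one_of_le₀ (by exact_mod_cast hkn) n.cast_nonneg) j

theorem eq_zero_of_lt {n j : ℕ} (p : ℝ) (h : n < j) : binomPMF n p j = 0 := by
  simp [binomPMF, Nat.choose_eq_zero_of_lt h]

theorem succ_succ (n : ℕ) (p : ℝ) {i : ℕ} (hi : i ≤ n) :
    binomPMF (n + 1) p (i + 1) = p * binomPMF n p i + (1 - p) * binomPMF n p (i + 1) := by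
  unfold binomPMF
  rcases hi.eq_or_lt with rfl | hlt
  · simp [pow_succ, mul_comm]
  · rw [Nat.choose_succ_succ, Nat.succ_sub_succ, show n - i = n - (i + 1) + 1 by omega]
    push_cast
    ring

theorem succ_mul_one_sub {n j : ℕ} (p : ℝ) (hj : j < n) :
    ((j : ℝ) + 1) * (1 - p) * binomPMF n p (j + 1) = ((n : ℝ) - j) * p * binomPMF n p j := by
  have hchoose : (n.choose (j + 1) : ℝ) * ((j : ℝ) + 1) = n.choose j * ((n : ℝ) - j) := by
    have h := congrArg (Nat.cast : ℕ → ℝ) (Nat.choose_succ_right_eq n j)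
    push_cast [Nat.cast_sub hj.le] at h
    exact h
  unfold binomPMF
  rw [show n - j = n - (j + 1) + 1 by omega, pow_succ, pow_succ]
  linear_combination (p ^ j * p * (1 - p) ^ (n - (j + 1)) * (1 - p)) * hchoose

theorem mul_succ_le {n k j : ℕ} {p : ℝ} (hp : p = k / n) (hkj : k + 1 ≤ j) (hjn : j < n) :
    ((k : ℝ) + 2) * binomPMF n p (j + 1) ≤ k * binomPMF n p j := by
  have hn : (0 : ℝ) < n := by exact_mod_cast (by omega : 0 < n)
  have hpn : p * n = k := by rw [hp]; field_simp
  have hkj' : (k : ℝ) + 1 ≤ j := by exact_mod_cast hkj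
  have hjn' : (j : ℝ) + 1 ≤ n := by exact_mod_cast hjn
  have hB : 0 ≤ binomPMF n p (j + 1) := nonneg_of_eq_div hp (by omega) _
  have hid : ((j : ℝ) + 1) * ((n : ℝ) - k) * binomPMF n p (j + 1)
      = ((n : ℝ) - j) * (k * binomPMF n p j) := by
    rw [← hpn]; linear_combination (n : ℝ) * succ_mul_one_sub p hjn
  have hcoef : ((n : ℝ) - j) * ((k : ℝ) + 2) ≤ ((j : ℝ) + 1) * ((n : ℝ) - k) := by
    nlinarith [mul_nonneg hn.le (sub_nonneg.2 hkj')]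
  refine le_of_mul_le_mul_left ?_ (by linarith : (0 : ℝ) < n - j)
  calc ((n : ℝ) - j) * (((k : ℝ) + 2) * binomPMF n p (j + 1))
      = ((n : ℝ) - j) * ((k : ℝ) + 2) * binomPMF n p (j + 1) := by ring
    _ ≤ ((j : ℝ) + 1) * ((n : ℝ) - k) * binomPMF n p (j + 1) := by gcongr
    _ = ((n : ℝ) - j) * (k * binomPMF n p j) := hid

theorem sum_Icc_succ_succ (n a : ℕ) (p : ℝ) :
    ∑ j ∈ Icc (a + 1) (n + 1), binomPMF (n + 1) p j
      = p * ∑ j ∈ Icc a n, binomPMF n p j + (1 - p) * ∑ j ∈ Icc (a + 1) n, binomPMF n p j := by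
  have hshift : ∀ g : ℕ → ℝ, ∑ j ∈ Icc (a + 1) (n + 1), g j = ∑ j ∈ Icc a n, g (j + 1) := by
    intro g
    rw [← Ico_add_one_right_eq_Icc a, sum_Ico_add', Ico_add_one_right_eq_Icc]
  have hvanish : ∑ j ∈ Icc (a + 1) (n + 1), binomPMF n p j = ∑ j ∈ Icc (a + 1) n, binomPMF n p j :=
    (sum_subset (Icc_subset_Icc_right n.le_succ) fun j hj hj' ↦
      eq_zero_of_lt p (by simp only [mem_Icc] at hj hj'; omega)).symm
  rw [hshift, ← hvanish, hshift, mul_sum, mul_sum, ← sum_add_distrib]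
  exact sum_congr rfl fun j hj ↦ succ_succ n p (mem_Icc.1 hj).2

theorem two_mul_sum_Icc_le {n k : ℕ} {p : ℝ} (hp : p = k / n) (hkn : k < n) :
    2 * ∑ j ∈ Icc (k + 2) n, binomPMF n p j ≤ k * binomPMF n p (k + 1) := by
  have h := mul_sum_Icc_succ_le (a := k + 1) (N := n) (k.cast_nonneg' (α := ℝ))
    (fun j _ ↦ nonneg_of_eq_div hp hkn.le j)
    (fun j hj ↦ mul_succ_le hp (mem_Ico.1 hj).1 (mem_Ico.1 hj).2)
  rw [sum_Icc_eq_add_sum_Icc_succ _ hkn] at h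
  have hT : 0 ≤ ∑ j ∈ Icc (k + 2) n, binomPMF n p j :=
    sum_nonneg fun j _ ↦ nonneg_of_eq_div hp hkn.le j
  linarith

end binomPMF

theorem shift_binomial_tail_general (n k : ℕ) (hkn : k + 1 < n)
    (p : ℝ) (hp : p = (k : ℝ) / (n : ℝ)) :
    ((n : ℝ) / ((n : ℝ) + 1))
        * ∑ j ∈ Finset.Icc (k + 2) (n + 1), binomPMF (n + 1) p j
      ≥ ∑ j ∈ Finset.Icc (k + 2) n, binomPMF n p j := by
  have hn : (0 : ℝ) < n := by exact_mod_cast (by omega : 0 < n)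
  have hpn : p * n = k := by rw [hp]; field_simp
  have hsplit := binomPMF.sum_Icc_succ_succ n (k + 1) p
  rw [sum_Icc_eq_add_sum_Icc_succ _ (by omega : k + 1 ≤ n)] at hsplit
  have htail := binomPMF.two_mul_sum_Icc_le hp (by omega : k < n)
  set T := ∑ j ∈ Icc (k + 2) n, binomPMF n p j
  set b := binomPMF n p (k + 1)
  have hT : 0 ≤ T := sum_nonneg fun j _ ↦ binomPMF.nonneg_of_eq_div hp (by omega) j
  have hgap : n * (p * (b + T) + (1 - p) * T) - T * (n + 1) = k * b - T := by
    rw [← hpn]; ring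
  rw [hsplit, ge_iff_le, div_mul_eq_mul_div, le_div_iff₀ (by positivity)]
  linarith

/-- For `p = k/n` with `1 ≤ k` and `k + 1 < n`,
`(n/(n+1))·P(Bin(n+1,p) > k+1) ≥ P(Bin(n,p) > k+1)`. -/
theorem shift_binomial_tail (n k : ℕ) (hk : 1 ≤ k) (hkn : k + 1 < n)
    (p : ℝ) (hp : p = (k : ℝ) / (n : ℝ)) :
    ((n : ℝ) / ((n : ℝ) + 1))
        * ∑ j ∈ Finset.Icc (k + 2) (n + 1), binomPMF (n + 1) p j
      ≥ ∑ j ∈ Finset.Icc (k + 2) n, binomPMF n p j :=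
  shift_binomial_tail_general n k hkn p hp
end

section
/- Let n, k be positive integers with k + 1 < n and p = k/n. Then P(Bin(n,p) ≤ k) + (n/(n+1))·P(Bin(n+1,p) > k+1) ≥ 1 − P(Bin(n,p) = k+1). -/
open Finset

/-!
Split the total mass `1` of `Bin(n,p)` as `P(X ≤ k) + P(X = k+1) + P(X ≥ k+2)`. Since `np = k`,
every `j ≥ k+2` lies above `np + 1`, and there the identity
`(n+1-j)·P(Bin(n+1,p) = j) = (n+1)(1-p)·P(Bin(n,p) = j)` gives
`(n+1)·P(Bin(n,p) = j) ≤ n·P(Bin(n+1,p) = j)`; summing over `j ≥ k+2` bounds the upper tail.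
-/

lemma binomPMF_nonneg {p : ℝ} (hp₀ : 0 ≤ p) (hp₁ : p ≤ 1) (n j : ℕ) : 0 ≤ binomPMF n p j := by
  unfold binomPMF
  have : 0 ≤ 1 - p := sub_nonneg.2 hp₁
  positivity

lemma sum_range_binomPMF (n : ℕ) (p : ℝ) : ∑ j ∈ range (n + 1), binomPMF n p j = 1 := by
  have h := (add_pow p (1 - p) n).symm
  rw [add_sub_cancel, one_pow] at h
  rw [← h]
  refine sum_congr rfl fun j _ => ?_
  unfold binomPMF
  ring

lemma one_sub_binomPMF_eq {n m : ℕ} (hm : m ≤ n) (p : ℝ) :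
    1 - binomPMF n p m
      = ∑ j ∈ range m, binomPMF n p j + ∑ j ∈ Icc (m + 1) n, binomPMF n p j := by
  rw [← sum_range_binomPMF n p, range_eq_Ico,
    ← sum_Ico_consecutive _ (Nat.zero_le (m + 1)) (by omega : m + 1 ≤ n + 1),
    ← range_eq_Ico, sum_range_succ, Ico_add_one_right_eq_Icc]
  ring

lemma sub_mul_binomPMF_succ {n j : ℕ} (hj : j ≤ n) (p : ℝ) :
    ((n : ℝ) + 1 - j) * binomPMF (n + 1) p j = ((n : ℝ) + 1) * (1 - p) * binomPMF n p j := by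
  have hchoose : ((n + 1).choose j : ℝ) * ((n : ℝ) + 1 - j) = (n.choose j : ℝ) * ((n : ℝ) + 1) := by
    have h := congrArg (Nat.cast : ℕ → ℝ) (Nat.choose_mul_succ_eq n j)
    push_cast [Nat.cast_sub (by omega : j ≤ n + 1)] at h
    exact h.symm
  unfold binomPMF
  rw [Nat.sub_add_comm hj, pow_succ]
  linear_combination p ^ j * (1 - p) ^ (n - j) * (1 - p) * hchoose

lemma succ_mul_binomPMF_le {n j : ℕ} {p : ℝ} (hp₀ : 0 ≤ p) (hp₁ : p < 1)
    (hj : n * p + 1 ≤ j) (hjn : j ≤ n) :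
    ((n : ℝ) + 1) * binomPMF n p j ≤ n * binomPMF (n + 1) p j := by
  have hq : 0 < 1 - p := sub_pos.2 hp₁
  have hnonneg := binomPMF_nonneg hp₀ hp₁.le (n + 1) j
  refine le_of_mul_le_mul_right ?_ hq
  calc ((n : ℝ) + 1) * binomPMF n p j * (1 - p)
      = ((n : ℝ) + 1 - j) * binomPMF (n + 1) p j := by rw [sub_mul_binomPMF_succ hjn]; ring
    _ ≤ n * (1 - p) * binomPMF (n + 1) p j := by gcongr; linarith
    _ = n * binomPMF (n + 1) p j * (1 - p) := by ring

lemma succ_mul_sum_Icc_binomPMF_le {n m : ℕ} {p : ℝ} (hp₀ : 0 ≤ p) (hp₁ : p < 1)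
    (hm : n * p + 1 ≤ m) :
    ((n : ℝ) + 1) * ∑ j ∈ Icc m n, binomPMF n p j
      ≤ n * ∑ j ∈ Icc m (n + 1), binomPMF (n + 1) p j := by
  rw [mul_sum, mul_sum]
  calc ∑ j ∈ Icc m n, ((n : ℝ) + 1) * binomPMF n p j
      ≤ ∑ j ∈ Icc m n, (n : ℝ) * binomPMF (n + 1) p j := by
        refine sum_le_sum fun j hj => ?_
        obtain ⟨hmj, hjn⟩ := mem_Icc.1 hj
        exact succ_mul_binomPMF_le hp₀ hp₁ (hm.trans (by exact_mod_cast hmj)) hjn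
    _ ≤ ∑ j ∈ Icc m (n + 1), (n : ℝ) * binomPMF (n + 1) p j :=
        sum_le_sum_of_subset_of_nonneg (Icc_subset_Icc_right n.le_succ) fun j _ _ =>
          mul_nonneg n.cast_nonneg (binomPMF_nonneg hp₀ hp₁.le _ _)

theorem psi_expectation_lower_bound_general (n k : ℕ) (hkn : k + 1 < n)
    (p : ℝ) (hp : p = (k : ℝ) / (n : ℝ)) :
    (∑ j ∈ Finset.range (k + 1), binomPMF n p j)
        + ((n : ℝ) / ((n : ℝ) + 1))
          * ∑ j ∈ Finset.Icc (k + 2) (n + 1), binomPMF (n + 1) p j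
      ≥ 1 - binomPMF n p (k + 1) := by
  have hn : (0 : ℝ) < n := Nat.cast_pos.2 (by omega)
  have hp₀ : 0 ≤ p := hp ▸ by positivity
  have hp₁ : p < 1 := by rw [hp, div_lt_one hn]; exact_mod_cast (by omega : k < n)
  have hnp : (n : ℝ) * p + 1 ≤ (k + 2 : ℕ) := by
    rw [hp, mul_div_cancel₀ _ hn.ne']; push_cast; linarith
  have htail := succ_mul_sum_Icc_binomPMF_le hp₀ hp₁ hnp
  rw [ge_iff_le, one_sub_binomPMF_eq (by omega) p, div_mul_eq_mul_div]
  gcongr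
  rw [le_div_iff₀ (by positivity)]
  linarith

/-- For `p = k/n` with `1 ≤ k` and `k + 1 < n`,
`P(Bin(n,p) ≤ k) + (n/(n+1))·P(Bin(n+1,p) > k+1) ≥ 1 − P(Bin(n,p) = k+1)`. -/
theorem psi_expectation_lower_bound (n k : ℕ) (hk : 1 ≤ k) (hkn : k + 1 < n)
    (p : ℝ) (hp : p = (k : ℝ) / (n : ℝ)) :
    (∑ j ∈ Finset.range (k + 1), binomPMF n p j)
        + ((n : ℝ) / ((n : ℝ) + 1))
          * ∑ j ∈ Finset.Icc (k + 2) (n + 1), binomPMF (n + 1) p j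
      ≥ 1 - binomPMF n p (k + 1) :=
  psi_expectation_lower_bound_general n k hkn p hp
end

section
/- Fix a real number β with 1/2 < β < 1, and define T(i) = i·β^{i−1}/(1 − β^i) for integers i ≥ 1. Then T is monotonically decreasing: T(i+1) ≤ T(i) for all i ≥ 1. Consequently, for every integers 1 ≤ s ≤ k, s·(1−β)·β^{s−1}/(1 − β^s) ≥ k·(1−β)·β^{k−1}/(1 − β^k). -/
private lemma T_step (β : ℝ) (hβ0 : 0 < β) (hβ2 : β < 1) (i : ℕ) (hi : 1 ≤ i) :
    ((i : ℝ) + 1) * β ^ i / (1 - β ^ (i + 1))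
      ≤ (i : ℝ) * β ^ (i - 1) / (1 - β ^ i) := by
  obtain ⟨j, rfl⟩ := Nat.exists_eq_add_of_le hi
  simp only [Nat.add_sub_cancel_left]
  have hp : ∀ n : ℕ, (0:ℝ) < β ^ n := fun n => pow_pos hβ0 n
  have hd1 : (0:ℝ) < 1 - β ^ (1 + j + 1) :=
    sub_pos.mpr (pow_lt_one₀ hβ0.le hβ2 (by omega))
  have hd2 : (0:ℝ) < 1 - β ^ (1 + j) :=
    sub_pos.mpr (pow_lt_one₀ hβ0.le hβ2 (by omega))
  rw [div_le_div_iff₀ hd1 hd2]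
  have hb := one_add_mul_le_pow (show (-2:ℝ) ≤ β - 1 by linarith) (j + 2)
  have hb' : 1 + ((j:ℝ) + 2) * (β - 1) ≤ β ^ (j + 2) := by
    simpa using hb
  have hpj := hp j
  have key := mul_le_mul_of_nonneg_left hb' hpj.le
  have e1 : β ^ (1 + j) = β ^ j * β := by ring
  have e2 : β ^ (1 + j + 1) = β ^ j * β ^ 2 := by ring
  have e3 : β ^ (j + 2) = β ^ j * β ^ 2 := by ring
  rw [e3] at key
  push_cast
  rw [e1, e2]
  nlinarith [sq_nonneg (β ^ j), hpj]

/-- For `1/2 < β < 1`, the function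
`T(i) = i·β^{i−1}/(1 − β^i)` is monotonically decreasing on `i ≥ 1`;
consequently, for all integers `1 ≤ s ≤ k`,
`s·(1−β)·β^{s−1}/(1 − β^s) ≥ k·(1−β)·β^{k−1}/(1 − β^k)`. -/
theorem pocket_dictionary_T_decreasing (β : ℝ) (hβ1 : 1 / 2 < β) (hβ2 : β < 1) :
    (∀ i : ℕ, 1 ≤ i →
      ((i : ℝ) + 1) * β ^ i / (1 - β ^ (i + 1))
        ≤ (i : ℝ) * β ^ (i - 1) / (1 - β ^ i)) ∧
    (∀ s k : ℕ, 1 ≤ s → s ≤ k →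
      (s : ℝ) * (1 - β) * β ^ (s - 1) / (1 - β ^ s)
        ≥ (k : ℝ) * (1 - β) * β ^ (k - 1) / (1 - β ^ k)) := by
  have hβ0 : 0 < β := by linarith
  refine ⟨fun i hi => T_step β hβ0 hβ2 i hi, ?_⟩
  intro s k hs hsk
  induction k, hsk using Nat.le_induction with
  | base => exact le_refl _
  | succ k hk ih =>
    refine le_trans ?_ ih
    push_cast
    have hstep := T_step β hβ0 hβ2 k (le_trans hs hk)
    have h1β : (0:ℝ) ≤ 1 - β := by linarith
    have := mul_le_mul_of_nonneg_left hstep h1β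
    calc ((k:ℝ) + 1) * (1 - β) * β ^ ((k + 1) - 1) / (1 - β ^ (k + 1))
        = (1 - β) * (((k:ℝ) + 1) * β ^ k / (1 - β ^ (k + 1))) := by
          rw [Nat.add_sub_cancel]; ring
      _ ≤ (1 - β) * ((k:ℝ) * β ^ (k - 1) / (1 - β ^ k)) := this
      _ = (k:ℝ) * (1 - β) * β ^ (k - 1) / (1 - β ^ k) := by ring
end
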